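/- arXiv:1502.07901 — 3 statements merged into one kernel-verified Lean document; each statement's English description precedes it below -/
import Mathlib

section
/- Let ℍ² = {(z,w) ∈ ℂ² : Im z > |w|²} and f(z,w) = (2z + i w², w), which maps ℍ² into ℍ². Then the invariant set of f equals ℍ² ∩ {Re w = 0}; that is, ⋂_{n≥0} f^n(ℍ²) = {(z,w) ∈ ℂ² : Im z > |w|² and Re w = 0}. -/
/-- The Siegel upper half-space `ℍ² = {(z,w) : Im z > |w|²}` in `ℂ²`. -/
def Siegel2 : Set (ℂ × ℂ) := {p : ℂ × ℂ | ‖p.2‖ ^ 2 < p.1.im}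

/-- The map `f(z,w) = (2z + i w², w)`. -/
def siegelMap : ℂ × ℂ → ℂ × ℂ :=
  fun p => (2 * p.1 + Complex.I * p.2 ^ 2, p.2)

/-!
With the height `h(z,w) = Im z - |w|²`, so that `ℍ² = {h > 0}`, one computes
`h(f(z,w)) = 2 h(z,w) + 2 (Re w)²`, while `f` fixes `w`. Since `f` is a bijection of `ℂ²`,
`p ∈ fⁿ(ℍ²)` iff `(2ⁿ - 1) · 2 (Re w)² < h(p)`. For `Re w ≠ 0` this fails for large `n`,
and for `Re w = 0` it says `p ∈ ℍ²`.
-/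

lemma forall_pow_sub_one_mul_lt_iff {r a b : ℝ} (hr : 1 < r) (hb : 0 ≤ b) :
    (∀ n : ℕ, (r ^ n - 1) * b < a) ↔ 0 < a ∧ b = 0 := by
  constructor
  · intro h
    have ha : 0 < a := by simpa using h 0
    refine ⟨ha, ?_⟩
    by_contra hb0
    have hb' : 0 < b := lt_of_le_of_ne hb (Ne.symm hb0)
    obtain ⟨n, hn⟩ := pow_unbounded_of_one_lt (a / b + 1) hr
    have hlarge : a < (r ^ n - 1) * b := by
      rw [← div_lt_iff₀ hb']
      linarith
    exact (h n).not_gt hlarge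
  · rintro ⟨ha, rfl⟩ n
    simpa using ha

namespace Siegel2

noncomputable def height (p : ℂ × ℂ) : ℝ := p.1.im - ‖p.2‖ ^ 2

lemma mem_iff_height_pos {p : ℂ × ℂ} : p ∈ Siegel2 ↔ 0 < height p := by
  rw [height, sub_pos]
  rfl

end Siegel2

open Siegel2

lemma siegelMap_surjective : Function.Surjective siegelMap := by
  intro p
  refine ⟨((p.1 - Complex.I * p.2 ^ 2) / 2, p.2), ?_⟩
  simp only [siegelMap]
  ext <;> simp [mul_div_cancel₀]

lemma iterate_siegelMap_snd (n : ℕ) (p : ℂ × ℂ) : (siegelMap^[n] p).2 = p.2 := by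
  induction n with
  | zero => rfl
  | succ n ih => rwa [Function.iterate_succ_apply']

lemma height_siegelMap (p : ℂ × ℂ) :
    height (siegelMap p) = 2 * height p + 2 * p.2.re ^ 2 := by
  simp only [height, siegelMap, Complex.sq_norm, Complex.normSq_apply]
  simp [sq]
  ring

lemma height_iterate_siegelMap (n : ℕ) (p : ℂ × ℂ) :
    height (siegelMap^[n] p) = 2 ^ n * height p + (2 ^ n - 1) * (2 * p.2.re ^ 2) := by
  induction n with
  | zero => simp
  | succ n ih =>
    rw [Function.iterate_succ_apply', height_siegelMap, ih, iterate_siegelMap_snd]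
    ring

lemma mem_iff_of_iterate_siegelMap_eq {n : ℕ} {p q : ℂ × ℂ} (hqp : siegelMap^[n] q = p) :
    q ∈ Siegel2 ↔ (2 ^ n - 1) * (2 * p.2.re ^ 2) < height p := by
  rw [mem_iff_height_pos, ← hqp, height_iterate_siegelMap, iterate_siegelMap_snd,
    lt_add_iff_pos_left]
  exact (mul_pos_iff_of_pos_left (by positivity)).symm

lemma mem_image_iterate_siegelMap (n : ℕ) (p : ℂ × ℂ) :
    p ∈ siegelMap^[n] '' Siegel2 ↔ (2 ^ n - 1) * (2 * p.2.re ^ 2) < height p := by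
  constructor
  · rintro ⟨q, hq, hqp⟩
    exact (mem_iff_of_iterate_siegelMap_eq hqp).1 hq
  · intro h
    obtain ⟨q, hqp⟩ := (siegelMap_surjective.iterate n) p
    exact ⟨q, (mem_iff_of_iterate_siegelMap_eq hqp).2 h, hqp⟩

/-- The invariant set of `f(z,w) = (2z + i w², w)` on the Siegel upper half-space is
`ℍ² ∩ {Re w = 0}`. -/
theorem stmt_12 :
    (⋂ n : ℕ, siegelMap^[n] '' Siegel2) =
      {p : ℂ × ℂ | ‖p.2‖ ^ 2 < p.1.im ∧ p.2.re = 0} := by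
  ext p
  simp only [Set.mem_iInter, mem_image_iterate_siegelMap,
    forall_pow_sub_one_mul_lt_iff one_lt_two (by positivity : (0 : ℝ) ≤ 2 * p.2.re ^ 2)]
  simp [height, sub_pos]
end

section
/- Let f(z,w) = (2z + i w², w) and, for r ∈ ℝ, let h_r(z,w) = (z + i r² − 2 r w, w − i r). Then h_r ∘ f = f ∘ h_r as maps of ℂ² (equivalently h_r ∘ f ∘ h_r^{-1} = f), and h_r restricts to a bijection of the Siegel upper half-space ℍ² = {(z,w) ∈ ℂ² : Im z > |w|²} onto itself. -/
/-- The affine map `h_r(z,w) = (z + i r² − 2 r w, w − i r)`. -/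
def siegelAff (r : ℝ) : ℂ × ℂ → ℂ × ℂ :=
  fun p => (p.1 + Complex.I * (r : ℂ) ^ 2 - 2 * (r : ℂ) * p.2, p.2 - Complex.I * (r : ℂ))

/-! `h_r` is affine with inverse `h_{-r}`, and it preserves the defining function
`Im z - |w|²` of `ℍ²`: both `Im z` and `|w|²` change by `r² - 2 r Im w`. Hence `h_r` and
`h_{-r}` map `ℍ²` into itself and are mutually inverse there. The commutation `h_r ∘ f = f ∘ h_r`
is a polynomial identity in `z, w, r`, using only `i² = -1`. -/

theorem siegelAff_leftInverse_neg (r : ℝ) :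
    Function.LeftInverse (siegelAff r) (siegelAff (-r)) := by
  intro p
  simp only [siegelAff, Complex.ofReal_neg]
  ext <;> simp only <;> ring

theorem im_fst_sub_sq_norm_snd_siegelAff (r : ℝ) (p : ℂ × ℂ) :
    (siegelAff r p).1.im - ‖(siegelAff r p).2‖ ^ 2 = p.1.im - ‖p.2‖ ^ 2 := by
  simp only [siegelAff, Complex.sq_norm, Complex.normSq_apply, Complex.add_im,
    Complex.sub_im, Complex.sub_re, Complex.mul_im, Complex.mul_re, Complex.I_re, Complex.I_im,
    Complex.ofReal_re, Complex.ofReal_im, Complex.re_ofNat, Complex.im_ofNat,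
    ← Complex.ofReal_pow]
  ring

theorem mapsTo_siegelAff (r : ℝ) : Set.MapsTo (siegelAff r) Siegel2 Siegel2 := by
  intro p hp
  have h := im_fst_sub_sq_norm_snd_siegelAff r p
  simp only [Siegel2, Set.mem_ofPred_eq] at hp ⊢
  linarith

theorem bijOn_siegelAff (r : ℝ) : Set.BijOn (siegelAff r) Siegel2 Siegel2 := by
  have hinv : Set.InvOn (siegelAff (-r)) (siegelAff r) Siegel2 Siegel2 := by
    refine ⟨fun p _ => ?_, fun p _ => siegelAff_leftInverse_neg r p⟩
    simpa using siegelAff_leftInverse_neg (-r) p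
  exact hinv.bijOn (mapsTo_siegelAff r) (mapsTo_siegelAff (-r))

theorem siegelAff_comp_siegelMap (r : ℝ) :
    siegelAff r ∘ siegelMap = siegelMap ∘ siegelAff r := by
  funext p
  refine Prod.ext ?_ rfl
  simp only [Function.comp, siegelAff, siegelMap]
  linear_combination (2 * (r : ℂ) * p.2 - Complex.I * (r : ℂ) ^ 2) * Complex.I_sq

/-- `h_r` commutes with `f` and restricts to a bijection of the Siegel upper
half-space onto itself. -/
theorem stmt_13 (r : ℝ) :
    siegelAff r ∘ siegelMap = siegelMap ∘ siegelAff r ∧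
    Set.BijOn (siegelAff r) Siegel2 Siegel2 :=
  ⟨siegelAff_comp_siegelMap r, bijOn_siegelAff r⟩
end

section
/- Let θ ∈ ℝ with −π/2 < θ < π/2 and let t ∈ ℝ with t ≥ 1. Then Re(e^{−2iθ} + 1) ≤ |e^{−2iθ} + t| − (t − 1) ≤ |e^{−2iθ} + 1|, where |·| denotes the complex modulus. In particular |e^{−2iθ} + t| − (t − 1) ≥ 1 + cos(2θ) > 0. -/
open Real

namespace Complex

theorem re_add_one_le_norm_add_ofReal_sub (z : ℂ) (t : ℝ) :
    (z + 1).re ≤ ‖z + (t : ℂ)‖ - (t - 1) := by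
  have h := re_le_norm (z + (t : ℂ))
  simp only [add_re, ofReal_re, one_re] at h ⊢
  linarith

theorem norm_add_ofReal_sub_le (z : ℂ) {t : ℝ} (ht : 1 ≤ t) :
    ‖z + (t : ℂ)‖ - (t - 1) ≤ ‖z + 1‖ := by
  have h : z + (t : ℂ) = (z + 1) + ((t - 1 : ℝ) : ℂ) := by push_cast; ring
  have := norm_add_le (z + 1) ((t - 1 : ℝ) : ℂ)
  rw [norm_real, norm_of_nonneg (by linarith), ← h] at this
  linarith

theorem exp_neg_two_mul_I_add_one_re (θ : ℝ) :
    (exp (-2 * θ * I) + 1).re = 1 + Real.cos (2 * θ) := by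
  have h : -2 * (θ : ℂ) * I = ((-(2 * θ) : ℝ) : ℂ) * I := by push_cast; ring
  rw [add_re, h, exp_ofReal_mul_I_re, Real.cos_neg, one_re, add_comm]

end Complex

theorem Real.one_add_cos_two_mul_pos {θ : ℝ} (hθ₁ : -(π / 2) < θ) (hθ₂ : θ < π / 2) :
    0 < 1 + Real.cos (2 * θ) := by
  have := Real.cos_pos_of_mem_Ioo ⟨hθ₁, hθ₂⟩
  rw [Real.cos_two_mul]
  nlinarith

/-- For `|θ| < π/2` and `t ≥ 1`:
`Re(e^{−2iθ} + 1) ≤ |e^{−2iθ} + t| − (t − 1) ≤ |e^{−2iθ} + 1|`, and in particular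
`|e^{−2iθ} + t| − (t − 1) ≥ 1 + cos 2θ > 0`. -/
theorem stmt_17 (θ t : ℝ) (hθ₁ : -(π / 2) < θ) (hθ₂ : θ < π / 2) (ht : 1 ≤ t) :
    (Complex.exp (-2 * θ * Complex.I) + 1).re ≤
      ‖Complex.exp (-2 * θ * Complex.I) + (t : ℂ)‖ - (t - 1) ∧
    ‖Complex.exp (-2 * θ * Complex.I) + (t : ℂ)‖ - (t - 1) ≤
      ‖Complex.exp (-2 * θ * Complex.I) + 1‖ ∧
    1 + Real.cos (2 * θ) ≤
      ‖Complex.exp (-2 * θ * Complex.I) + (t : ℂ)‖ - (t - 1) ∧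
    0 < 1 + Real.cos (2 * θ) := by
  have hlower := Complex.re_add_one_le_norm_add_ofReal_sub (Complex.exp (-2 * θ * Complex.I)) t
  refine ⟨hlower, Complex.norm_add_ofReal_sub_le _ ht, ?_, Real.one_add_cos_two_mul_pos hθ₁ hθ₂⟩
  rwa [Complex.exp_neg_two_mul_I_add_one_re] at hlower
end
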